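/- For every oriented hyperplane H in ℝⁿ and every 1 ≤ p < ∞, the polarization P_H is L^p-contracting: for all measurable f, g with f − g ∈ L^p(ℝⁿ), ‖P_H f − P_H g‖_p ≤ ‖f − g‖_p. -/

import Mathlib

open MeasureTheory Set RealInnerProductSpace ENNReal

/-- The reflection of `x` in the hyperplane `u^⊥`. -/
noncomputable def reflH {n : ℕ} (u x : EuclideanSpace ℝ (Fin n)) :
    EuclideanSpace ℝ (Fin n) :=
  x - (2 * ⟪x, u⟫) • u

/-- The polarization of `f` with respect to the oriented hyperplane `u^⊥`. -/
noncomputable def polarization {n : ℕ} (u : EuclideanSpace ℝ (Fin n))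
    (f : EuclideanSpace ℝ (Fin n) → ℝ) (x : EuclideanSpace ℝ (Fin n)) : ℝ :=
  if 0 ≤ ⟪x, u⟫ then max (f x) (f (reflH u x)) else min (f x) (f (reflH u x))
/-! For `x` in the closed half-space `H⁺`, polarization replaces the pair `(f x, f x†)` by
`(max, min)` of it. For `Φ` convex, `Φ (max a b - max c d) + Φ (min a b - min c d)` is at most
`Φ (a - c) + Φ (b - d)`: after sorting `a ≥ b`, either the pairs are sorted alike and nothing
changes, or the two new differences lie between the old ones with the same sum. Since the
reflection preserves Lebesgue measure and swaps the two half-spaces up to the null set `H`,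
`∫ Φ ∘ h = ∫_{H⁺} (Φ (h x) + Φ (h x†))` for every `h`, and the pointwise inequality with
`Φ = |·|^p` integrates to the claim. -/

lemma ConvexOn.map_add_map_le_of_add_eq {Φ : ℝ → ℝ} (hΦ : ConvexOn ℝ univ Φ) {x y s t : ℝ}
    (hys : y ≤ s) (hsx : s ≤ x) (hst : s + t = x + y) : Φ s + Φ t ≤ Φ x + Φ y := by
  rcases (hys.trans hsx).eq_or_lt with hyx | hyx
  · obtain rfl : s = x := le_antisymm hsx (hyx ▸ hys)
    obtain rfl : t = y := by linarith
    rfl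
  set θ := (s - y) / (x - y)
  have hθ0 : 0 ≤ θ := div_nonneg (by linarith) (by linarith)
  have hθ1 : θ ≤ 1 := (div_le_one (by linarith)).2 (by linarith)
  have hs : θ * x + (1 - θ) * y = s := by
    simp only [θ]; field_simp; ring
  have ht : (1 - θ) * x + θ * y = t := by linarith
  have h₁ := hΦ.2 (mem_univ x) (mem_univ y) hθ0 (sub_nonneg.2 hθ1) (by ring)
  have h₂ := hΦ.2 (mem_univ x) (mem_univ y) (sub_nonneg.2 hθ1) hθ0 (by ring)
  simp only [smul_eq_mul, hs, ht] at h₁ h₂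
  linarith

theorem ConvexOn.map_max_sub_max_add_map_min_sub_min_le {Φ : ℝ → ℝ} (hΦ : ConvexOn ℝ univ Φ)
    (a b c d : ℝ) :
    Φ (max a b - max c d) + Φ (min a b - min c d) ≤ Φ (a - c) + Φ (b - d) := by
  wlog hba : b ≤ a generalizing a b c d
  · have := this b a d c (le_of_not_ge hba)
    rw [max_comm b, min_comm b, max_comm d, min_comm d] at this
    linarith
  rcases le_total d c with hdc | hcd
  · rw [max_eq_left hba, min_eq_right hba, max_eq_left hdc, min_eq_right hdc]
  · rw [max_eq_left hba, min_eq_right hba, max_eq_right hcd, min_eq_left hcd]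
    exact hΦ.map_add_map_le_of_add_eq (by linarith) (by linarith) (by ring)

lemma convexOn_abs_rpow {p : ℝ} (hp : 1 ≤ p) : ConvexOn ℝ univ fun t : ℝ => |t| ^ p := by
  refine ⟨convex_univ, fun x _ y _ a b ha hb hab => ?_⟩
  calc |a • x + b • y| ^ p ≤ (a • |x| + b • |y|) ^ p := by
        gcongr
        simpa [smul_eq_mul, abs_mul, abs_of_nonneg ha, abs_of_nonneg hb] using
          abs_add_le (a * x) (b * y)
    _ ≤ a • |x| ^ p + b • |y| ^ p :=
        (convexOn_rpow hp).2 (abs_nonneg x) (abs_nonneg y) ha hb hab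

section Reflection

variable {n : ℕ} {u : EuclideanSpace ℝ (Fin n)}

lemma reflH_eq_reflection (hu : ‖u‖ = 1) : reflH u = (ℝ ∙ u)ᗮ.reflection := by
  ext1 x
  rw [Submodule.reflection_orthogonal_apply, Submodule.reflection_singleton_apply, reflH, hu,
    real_inner_comm x u]
  push_cast
  module

lemma reflH_reflH (hu : ‖u‖ = 1) (x : EuclideanSpace ℝ (Fin n)) : reflH u (reflH u x) = x := by
  rw [reflH_eq_reflection hu, Submodule.reflection_reflection]

lemma inner_reflH (hu : ‖u‖ = 1) (x : EuclideanSpace ℝ (Fin n)) :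
    ⟪reflH u x, u⟫ = -⟪x, u⟫ := by
  rw [reflH, inner_sub_left, real_inner_smul_left, real_inner_self_eq_norm_sq, hu]
  ring

lemma reflH_of_inner_eq_zero {x : EuclideanSpace ℝ (Fin n)} (hx : ⟪x, u⟫ = 0) :
    reflH u x = x := by
  simp [reflH, hx]

lemma measurePreserving_reflH (hu : ‖u‖ = 1) : MeasurePreserving (reflH u) :=
  reflH_eq_reflection hu ▸ (ℝ ∙ u)ᗮ.reflection.measurePreserving

lemma measurableEmbedding_reflH (hu : ‖u‖ = 1) : MeasurableEmbedding (reflH u) :=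
  reflH_eq_reflection hu ▸ (ℝ ∙ u)ᗮ.reflection.toHomeomorph.measurableEmbedding

lemma volume_setOf_inner_eq_zero (hu : ‖u‖ = 1) :
    volume {x : EuclideanSpace ℝ (Fin n) | ⟪x, u⟫ = 0} = 0 := by
  have hH : {x : EuclideanSpace ℝ (Fin n) | ⟪x, u⟫ = 0} = (ℝ ∙ u)ᗮ := by
    ext x
    exact Submodule.mem_orthogonal_singleton_iff_inner_left.symm
  rw [hH]
  refine Measure.addHaar_submodule _ _ fun htop => ?_
  have : ⟪u, u⟫ = 0 :=
    Submodule.mem_orthogonal_singleton_iff_inner_right.1 (htop ▸ Submodule.mem_top)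
  simp [hu] at this

lemma lintegral_eq_setLIntegral_add_comp_reflH (hu : ‖u‖ = 1)
    {F : EuclideanSpace ℝ (Fin n) → ℝ≥0∞} (hF : Measurable F) :
    ∫⁻ x, F x = ∫⁻ x in {x | 0 ≤ ⟪x, u⟫}, F x + F (reflH u x) := by
  set H := {x : EuclideanSpace ℝ (Fin n) | 0 ≤ ⟪x, u⟫}
  have hHm : MeasurableSet H := measurableSet_le measurable_const (by fun_prop)
  have hpre : reflH u ⁻¹' Hᶜ = {x | 0 < ⟪x, u⟫} := by
    ext x
    simp [H, inner_reflH hu]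
  have hae : {x : EuclideanSpace ℝ (Fin n) | 0 < ⟪x, u⟫} =ᵐ[volume] H := by
    filter_upwards [measure_eq_zero_iff_ae_notMem.1 (volume_setOf_inner_eq_zero hu)] with x hx
    simp only [H, eq_iff_iff] at hx ⊢
    exact ⟨le_of_lt, fun h => h.lt_of_ne' hx⟩
  calc ∫⁻ x, F x = (∫⁻ x in H, F x) + ∫⁻ x in Hᶜ, F x := (lintegral_add_compl F hHm).symm
    _ = (∫⁻ x in H, F x) + ∫⁻ x in H, F (reflH u x) := by
      rw [← (measurePreserving_reflH hu).setLIntegral_comp_preimage_emb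
        (measurableEmbedding_reflH hu) F Hᶜ, hpre, setLIntegral_congr hae]
    _ = ∫⁻ x in H, F x + F (reflH u x) := (lintegral_add_left hF _).symm

end Reflection

section Polarization

variable {n : ℕ} {u : EuclideanSpace ℝ (Fin n)} {f g : EuclideanSpace ℝ (Fin n) → ℝ}

lemma measurable_polarization (hf : Measurable f) : Measurable (polarization u f) := by
  have hR : Measurable fun x => f (reflH u x) := hf.comp (by unfold reflH; fun_prop)
  exact Measurable.ite (measurableSet_le measurable_const (by fun_prop)) (hf.max hR) (hf.min hR)

lemma polarization_of_nonneg {x : EuclideanSpace ℝ (Fin n)} (hx : 0 ≤ ⟪x, u⟫) :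
    polarization u f x = max (f x) (f (reflH u x)) :=
  if_pos hx

lemma polarization_reflH_of_nonneg (hu : ‖u‖ = 1) {x : EuclideanSpace ℝ (Fin n)}
    (hx : 0 ≤ ⟪x, u⟫) : polarization u f (reflH u x) = min (f x) (f (reflH u x)) := by
  rcases hx.lt_or_eq with hx | hx
  · rw [polarization, if_neg (by rw [inner_reflH hu]; linarith), reflH_reflH hu, min_comm]
  · have hR : reflH u x = x := reflH_of_inner_eq_zero hx.symm
    rw [hR, polarization_of_nonneg hx.le, hR, max_self, min_self]

lemma enorm_polarization_sub_rpow_add_le (hu : ‖u‖ = 1) {q : ℝ} (hq : 1 ≤ q)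
    {x : EuclideanSpace ℝ (Fin n)} (hx : 0 ≤ ⟪x, u⟫) :
    ‖(polarization u f - polarization u g) x‖ₑ ^ q
        + ‖(polarization u f - polarization u g) (reflH u x)‖ₑ ^ q
      ≤ ‖(f - g) x‖ₑ ^ q + ‖(f - g) (reflH u x)‖ₑ ^ q := by
  simp only [Pi.sub_apply, polarization_of_nonneg hx, polarization_reflH_of_nonneg hu hx,
    Real.enorm_eq_ofReal_abs, ENNReal.ofReal_rpow_of_nonneg (abs_nonneg _) (by linarith : 0 ≤ q)]
  rw [← ENNReal.ofReal_add (by positivity) (by positivity),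
    ← ENNReal.ofReal_add (by positivity) (by positivity)]
  exact ENNReal.ofReal_le_ofReal
    ((convexOn_abs_rpow hq).map_max_sub_max_add_map_min_sub_min_le _ _ _ _)

lemma lintegral_enorm_polarization_sub_rpow_le (hu : ‖u‖ = 1) {q : ℝ} (hq : 1 ≤ q)
    (hf : Measurable f) (hg : Measurable g) :
    ∫⁻ x, ‖(polarization u f - polarization u g) x‖ₑ ^ q
      ≤ ∫⁻ x, ‖(f - g) x‖ₑ ^ q := by
  have hPm := ((measurable_polarization (u := u) hf).sub
    (measurable_polarization (u := u) hg)).enorm.pow_const q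
  have hm := (hf.sub hg).enorm.pow_const q
  rw [lintegral_eq_setLIntegral_add_comp_reflH hu hPm, lintegral_eq_setLIntegral_add_comp_reflH hu hm]
  exact setLIntegral_mono (hm.add (hm.comp (measurePreserving_reflH hu).measurable))
    fun x hx => enorm_polarization_sub_rpow_add_le hu hq hx

end Polarization

theorem stmt_14_general {n : ℕ} (u : EuclideanSpace ℝ (Fin n)) (hu : ‖u‖ = 1)
    (p : ℝ≥0∞) (hp1 : 1 ≤ p) (hp2 : p ≠ ⊤)
    (f g : EuclideanSpace ℝ (Fin n) → ℝ) (hf : Measurable f) (hg : Measurable g) :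
    eLpNorm (polarization u f - polarization u g) p volume ≤
      eLpNorm (f - g) p volume := by
  have hp0 : p ≠ 0 := (zero_lt_one.trans_le hp1).ne'
  have hq : 1 ≤ p.toReal := by simpa using ENNReal.toReal_mono hp2 hp1
  rw [eLpNorm_eq_lintegral_rpow_enorm_toReal hp0 hp2, eLpNorm_eq_lintegral_rpow_enorm_toReal hp0 hp2]
  exact ENNReal.rpow_le_rpow (lintegral_enorm_polarization_sub_rpow_le hu hq hf hg) (by positivity)

theorem stmt_14 {n : ℕ} (u : EuclideanSpace ℝ (Fin n)) (hu : ‖u‖ = 1)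
    (p : ℝ≥0∞) (hp1 : 1 ≤ p) (hp2 : p ≠ ⊤)
    (f g : EuclideanSpace ℝ (Fin n) → ℝ) (hf : Measurable f) (hg : Measurable g)
    (hfg : MemLp (f - g) p volume) :
    eLpNorm (polarization u f - polarization u g) p volume ≤
      eLpNorm (f - g) p volume :=
  stmt_14_general u hu p hp1 hp2 f g hf hg
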